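/- arXiv:2009.00272 — 5 statements merged into one kernel-verified Lean document; each statement's English description precedes it below -/
import Mathlib

section
/- Let α ∈ ℂ, C, D ∈ M₂(ℂ), and let A ∈ M₄(ℂ) be the block matrix [[αI₂, C],[D, −αI₂]]. Then for every θ ∈ ℝ and every λ ∈ ℂ, det(λ·I₄ − Im(e^{−iθ}A)) = det((λ² − (Im(e^{−iθ}α))²)·I₂ − (1/4)·(H − 2·Re(e^{−2iθ}Z))), where H = C*C + DD* and Z = D·C. Consequently the eigenvalues of Im(e^{−iθ}A) are ±√((Im(e^{−iθ}α))² + μ_j/4), j = 1,2, where μ₁, μ₂ are the eigenvalues of H − 2·Re(e^{−2iθ}Z). -/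
open Matrix

noncomputable section

/-- The numerical range of an `n × n` complex matrix:
`W(M) = {⟨Mx, x⟩ : ‖x‖ = 1}` with the standard inner product on `ℂⁿ`. -/
def nrange {n : ℕ} (M : Matrix (Fin n) (Fin n) ℂ) : Set ℂ :=
  {z | ∃ x : Fin n → ℂ, (∑ i, ‖x i‖ ^ 2 = 1) ∧
    (∑ i, M.mulVec x i * (starRingEnd ℂ) (x i)) = z}

/-- The ellipse with foci `f₁, f₂` and semi-major axis `a`. -/
def ellipseSet (f₁ f₂ : ℂ) (a : ℝ) : Set ℂ :=
  {z | ‖z - f₁‖ + ‖z - f₂‖ = 2 * a}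

/-- `S` is bi-elliptical: the convex hull of the union of two nondegenerate
ellipses with distinct centers. -/
def IsBiElliptical (S : Set ℂ) : Prop :=
  ∃ (f₁ f₂ g₁ g₂ : ℂ) (a a' : ℝ), 0 < a ∧ 0 < a' ∧
    ‖f₁ - f₂‖ < 2 * a ∧ ‖g₁ - g₂‖ < 2 * a' ∧
    (f₁ + f₂) / 2 ≠ (g₁ + g₂) / 2 ∧
    S = convexHull ℝ (ellipseSet f₁ f₂ a ∪ ellipseSet g₁ g₂ a')

/-- The imaginary part `(M - M*) / (2i)` of a square complex matrix. -/
def Mim {n : ℕ} (M : Matrix (Fin n) (Fin n) ℂ) : Matrix (Fin n) (Fin n) ℂ :=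
  (2 * Complex.I)⁻¹ • (M - Mᴴ)

/-- The real part `(M + M*) / 2` of a square complex matrix. -/
def Mre {n : ℕ} (M : Matrix (Fin n) (Fin n) ℂ) : Matrix (Fin n) (Fin n) ℂ :=
  (2 : ℂ)⁻¹ • (M + Mᴴ)

/-- The block matrix `[[α I₂, C], [D, -α I₂]]` as a `4 × 4` matrix. -/
def blockA (α : ℂ) (C D : Matrix (Fin 2) (Fin 2) ℂ) : Matrix (Fin 4) (Fin 4) ℂ :=
  !![α, 0, C 0 0, C 0 1;
     0, α, C 1 0, C 1 1;
     D 0 0, D 0 1, -α, 0;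
     D 1 0, D 1 1, 0, -α]

/-!
The imaginary part of `e^{-iθ} A` is again a block matrix whose diagonal blocks are the scalars
`± Im(e^{-iθ} α)`, and for such block matrices `det [[a, B], [C, d]] = det (a d - C B)`, as if the
blocks were numbers. With `u = e^{-iθ}` and `|u| = 1`, the product of the two off-diagonal blocks
`(u D - ū C*) (u C - ū D*) / (2i)²` expands to `(H - 2 Re(u² Z)) / 4`.
-/

section
variable {n R : Type*} [Fintype n] [DecidableEq n] [CommRing R]

theorem Matrix.det_fromBlocks_smul_one_mul_pow (a d : R) (B C : Matrix n n R) :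
    (fromBlocks (a • 1) B C (d • 1)).det * (a * d) ^ Fintype.card n =
      ((a * d) • 1 - C * B).det * (a * d) ^ Fintype.card n := by
  have hmul : fromBlocks (a • 1) B C (d • 1) * fromBlocks (d • 1) (-B) 0 (a • 1) =
      fromBlocks ((a * d) • 1) 0 (d • C) ((a * d) • 1 - C * B) := by
    simp only [fromBlocks_multiply, Matrix.smul_mul, Matrix.mul_smul, Matrix.one_mul,
      Matrix.mul_one, Matrix.mul_zero, Matrix.mul_neg, smul_smul, add_zero]
    congr 1 <;> module
  have hdet := congrArg det hmul
  rw [det_mul, det_fromBlocks_zero₂₁, det_fromBlocks_zero₁₂] at hdet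
  simp only [det_smul, det_one, mul_one] at hdet
  rw [mul_pow]
  linear_combination hdet

theorem Matrix.det_fromBlocks_smul_one (a d : R) (B C : Matrix n n R) :
    (fromBlocks (a • 1) B C (d • 1)).det = ((a * d) • 1 - C * B).det := by
  -- `a` and `d` may be zero divisors; over `R[X]` the shifted scalars `X + a`, `X + d` are not,
  -- so the factor can be cancelled there before specialising at `X = 0`.
  let a' : Polynomial R := .X + .C a
  let d' : Polynomial R := .X + .C d
  have hreg : IsRegular ((a' * d') ^ Fintype.card n) :=
    (((Polynomial.monic_X_add_C a).mul (Polynomial.monic_X_add_C d)).pow _).isRegular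
  have hpoly := hreg.right.eq_iff.mp <|
    det_fromBlocks_smul_one_mul_pow a' d' (B.map Polynomial.C) (C.map Polynomial.C)
  have heval := congrArg (Polynomial.evalRingHom 0) hpoly
  simp only [RingHom.map_det] at heval
  convert heval using 2
  · simp [a', d', fromBlocks_map, Matrix.map_smul', Matrix.map_map, Function.comp_def]
  · ext i j
    simp [a', d', Matrix.one_apply, Matrix.mul_apply, Polynomial.eval_finsetSum]
    split_ifs <;> simp
end

open Complex

theorem blockA_eq_reindex_fromBlocks (α : ℂ) (C D : Matrix (Fin 2) (Fin 2) ℂ) :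
    blockA α C D = reindex finSumFinEquiv finSumFinEquiv (fromBlocks (α • 1) C D (-α • 1)) := by
  ext i j
  fin_cases i <;> fin_cases j <;> simp [blockA, finSumFinEquiv, Fin.addCases, one_apply]

theorem smul_one_sub_Mim_reindex {ι : Type*} [DecidableEq ι] {n : ℕ} (e : ι ≃ Fin n) (lam : ℂ)
    (M : Matrix ι ι ℂ) :
    lam • 1 - Mim (reindex e e M) = reindex e e (lam • 1 - (2 * I)⁻¹ • (M - Mᴴ)) := by
  ext i j
  simp [Mim, one_apply]

theorem imPart_fromBlocks {ι : Type*} [DecidableEq ι] (a : ℂ) (C D : Matrix ι ι ℂ) :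
    (2 * I)⁻¹ • (fromBlocks (a • 1) C D (-a • 1) - (fromBlocks (a • 1) C D (-a • 1))ᴴ) =
      fromBlocks ((a.im : ℂ) • 1) ((2 * I)⁻¹ • (C - Dᴴ)) ((2 * I)⁻¹ • (D - Cᴴ))
        (-(a.im : ℂ) • 1) := by
  have him (c : ℂ) : ((2 * I)⁻¹ • (c • 1 - (c • 1)ᴴ) : Matrix ι ι ℂ) = (c.im : ℂ) • 1 := by
    rw [im_eq_sub_conj, conjTranspose_smul, conjTranspose_one, ← sub_smul, smul_smul,
      div_eq_inv_mul]
    rfl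
  rw [fromBlocks_conjTranspose, sub_eq_add_neg, fromBlocks_neg, fromBlocks_add, fromBlocks_smul,
    ← sub_eq_add_neg, ← sub_eq_add_neg, ← sub_eq_add_neg, ← sub_eq_add_neg, him, him, neg_im,
    ofReal_neg]

theorem imPart_offDiag_mul {n : ℕ} {u : ℂ} (hu : star u * u = 1) (C D : Matrix (Fin n) (Fin n) ℂ) :
    ((2 * I)⁻¹ • (u • D - (u • C)ᴴ)) * ((2 * I)⁻¹ • (u • C - (u • D)ᴴ)) =
      (4 : ℂ)⁻¹ • (Cᴴ * C + D * Dᴴ - (2 : ℂ) • Mre (u ^ 2 • (D * C))) := by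
  have hI : (2 * I)⁻¹ * (2 * I)⁻¹ = -(4 : ℂ)⁻¹ := by
    rw [← mul_inv, mul_mul_mul_comm, I_mul_I]
    norm_num
  rw [Matrix.smul_mul, Matrix.mul_smul, smul_smul, hI]
  simp only [Mre, conjTranspose_smul, conjTranspose_mul, Matrix.sub_mul, Matrix.mul_sub,
    Matrix.smul_mul, Matrix.mul_smul, star_pow]
  linear_combination (norm := module) (4 : ℂ)⁻¹ • hu • (D * Dᴴ + Cᴴ * C)

theorem det_smul_one_sub_Mim_smul_fromBlocks {n : ℕ} (α lam : ℂ) {u : ℂ} (hu : star u * u = 1)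
    (C D : Matrix (Fin n) (Fin n) ℂ) :
    (lam • (1 : Matrix (Fin (n + n)) (Fin (n + n)) ℂ) -
        Mim (u • reindex finSumFinEquiv finSumFinEquiv (fromBlocks (α • 1) C D (-α • 1)))).det =
      ((lam ^ 2 - ((u * α).im : ℂ) ^ 2) • 1 -
        (4 : ℂ)⁻¹ • (Cᴴ * C + D * Dᴴ - (2 : ℂ) • Mre (u ^ 2 • (D * C)))).det := by
  set b : ℂ := ((u * α).im : ℂ)
  have hF : u • fromBlocks (α • 1) C D (-α • 1) =
      fromBlocks ((u * α) • 1) (u • C) (u • D) (-(u * α) • 1 : Matrix (Fin n) (Fin n) ℂ) := by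
    rw [fromBlocks_smul, smul_smul, smul_smul, mul_neg]
  have hblocks : lam • 1 - (2 * I)⁻¹ • (u • fromBlocks (α • 1) C D (-α • 1) -
        (u • fromBlocks (α • 1) C D (-α • 1))ᴴ) =
      fromBlocks ((lam - b) • 1) (-((2 * I)⁻¹ • (u • C - (u • D)ᴴ)))
        (-((2 * I)⁻¹ • (u • D - (u • C)ᴴ))) ((lam + b) • 1) := by
    rw [hF, imPart_fromBlocks, ← fromBlocks_one, fromBlocks_smul, sub_eq_add_neg, fromBlocks_neg,
      fromBlocks_add]
    congr 1 <;> module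
  have hreindex : u • reindex finSumFinEquiv finSumFinEquiv (fromBlocks (α • 1) C D (-α • 1)) =
      reindex finSumFinEquiv finSumFinEquiv (u • fromBlocks (α • 1) C D (-α • 1)) := rfl
  rw [hreindex, smul_one_sub_Mim_reindex, det_reindex_self, hblocks, det_fromBlocks_smul_one,
    neg_mul_neg, imPart_offDiag_mul hu, sq_sub_sq, mul_comm (lam + b)]

theorem det_smul_one_sub_inv_smul_eq_zero_iff {K ι : Type*} [Field K] [Fintype ι] [DecidableEq ι]
    {k : K} (hk : k ≠ 0) (c : K) (M : Matrix ι ι K) :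
    (c • 1 - k⁻¹ • M).det = 0 ↔ ((k * c) • 1 - M).det = 0 := by
  have hscale : (k * c) • 1 - M = k • (c • 1 - k⁻¹ • M) := by
    rw [smul_sub, smul_smul, smul_smul, mul_inv_cancel₀ hk, one_smul]
  rw [hscale, det_smul, mul_eq_zero, or_iff_right (pow_ne_zero _ hk)]

theorem stmt2 (α : ℂ) (C D : Matrix (Fin 2) (Fin 2) ℂ) (θ : ℝ) (lam : ℂ)
    (H Z : Matrix (Fin 2) (Fin 2) ℂ) (hH : H = Cᴴ * C + D * Dᴴ) (hZ : Z = D * C) :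
    (lam • (1 : Matrix (Fin 4) (Fin 4) ℂ)
        - Mim (Complex.exp (-(θ : ℂ) * Complex.I) • blockA α C D)).det
      = ((lam ^ 2 - (((Complex.exp (-(θ : ℂ) * Complex.I) * α).im : ℂ)) ^ 2)
            • (1 : Matrix (Fin 2) (Fin 2) ℂ)
          - (4 : ℂ)⁻¹ • (H - (2 : ℂ) • Mre (Complex.exp (-(2 * θ : ℂ) * Complex.I) • Z))).det ∧
    ((lam • (1 : Matrix (Fin 4) (Fin 4) ℂ)
        - Mim (Complex.exp (-(θ : ℂ) * Complex.I) • blockA α C D)).det = 0 ↔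
      ∃ μ : ℂ,
        (μ • (1 : Matrix (Fin 2) (Fin 2) ℂ)
            - (H - (2 : ℂ) • Mre (Complex.exp (-(2 * θ : ℂ) * Complex.I) • Z))).det = 0 ∧
        lam ^ 2 = (((Complex.exp (-(θ : ℂ) * Complex.I) * α).im : ℂ)) ^ 2 + μ / 4) := by
  subst hH hZ
  have hu : star (exp (-(θ : ℂ) * I)) * exp (-(θ : ℂ) * I) = 1 := by
    rw [star_def, ← exp_conj, ← exp_add]
    simp
  set u := exp (-(θ : ℂ) * I)
  have hu2 : exp (-(2 * θ : ℂ) * I) = u ^ 2 := by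
    rw [← exp_nat_mul]
    ring_nf
  have hdet := det_smul_one_sub_Mim_smul_fromBlocks α lam hu C D
  rw [← blockA_eq_reindex_fromBlocks] at hdet
  rw [hu2, hdet, det_smul_one_sub_inv_smul_eq_zero_iff (by norm_num : (4 : ℂ) ≠ 0)]
  refine ⟨rfl, fun h => ⟨_, h, by ring⟩, ?_⟩
  rintro ⟨μ, hμ, hlam⟩
  rwa [show 4 * (lam ^ 2 - ((u * α).im : ℂ) ^ 2) = μ by linear_combination (4 : ℂ) * hlam]
end
end

section
/- Let α ∈ ℂ, let B ∈ M₂(ℂ) be not normal, and let A ∈ M₄(ℂ) be the block matrix [[αI₂, B* + I₂],[B − I₂, −αI₂]]. Let L be a ℂ-linear subspace of ℂ⁴ with A·L ⊆ L and A*·L ⊆ L. If L has nonzero intersection with span{e₁, e₂} or with span{e₃, e₄} (where e₁, e₂, e₃, e₄ is the standard basis of ℂ⁴), then L = ℂ⁴. -/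
open Matrix

noncomputable section

/-!
Let `P = {u : (u, 0) ∈ L}`. Applying `A` and `A*` to `(u, 0)` and subtracting multiples of it
gives `(0, (B - 1)u)` and `(0, (B + 1)u)`; applying them to `(0, u)` gives `((B* + 1)u, 0)` and
`((B* - 1)u, 0)`. Hence `P = {u : (0, u) ∈ L}`, `P` is invariant under `B` and `B*`, and the
intersection hypothesis says `P ≠ 0`. If `P` were a line, it would be spanned by a common
eigenvector `v` of `B` and `B*`. The commutator `K = BB* - B*B` is then a traceless Hermitian
matrix with `Kv = 0`, so `tr (K*K) = tr (K)² - 2 det K = 0` and `K = 0`, contradicting the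
non-normality of `B`. So `P = ℂ²`, and `L` contains both blocks of `ℂ⁴`.
-/

namespace Matrix

theorem trace_mul_self_fin_two {R : Type*} [CommRing R] (K : Matrix (Fin 2) (Fin 2) R) :
    (K * K).trace = K.trace ^ 2 - 2 * K.det := by
  simp only [trace_fin_two, det_fin_two, mul_apply, Fin.sum_univ_two]
  ring

theorem IsHermitian.eq_zero_of_trace_eq_zero_of_det_eq_zero {R : Type*} [CommRing R]
    [PartialOrder R] [StarRing R] [StarOrderedRing R] [NoZeroDivisors R]
    {K : Matrix (Fin 2) (Fin 2) R} (hK : K.IsHermitian) (htr : K.trace = 0)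
    (hdet : K.det = 0) : K = 0 := by
  rw [← trace_conjTranspose_mul_self_eq_zero_iff, hK.eq, trace_mul_self_fin_two, htr, hdet]
  ring

open scoped ComplexOrder in
theorem commute_conjTranspose_of_common_eigenvector {𝕜 : Type*} [RCLike 𝕜]
    (B : Matrix (Fin 2) (Fin 2) 𝕜) {v : Fin 2 → 𝕜} (hv : v ≠ 0) {l m : 𝕜}
    (hl : B *ᵥ v = l • v) (hm : Bᴴ *ᵥ v = m • v) : B * Bᴴ = Bᴴ * B := by
  set K := B * Bᴴ - Bᴴ * B
  have hKv : K *ᵥ v = 0 := by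
    simp only [K, sub_mulVec, ← mulVec_mulVec, hl, hm, mulVec_smul, smul_smul, mul_comm l,
      sub_self]
  have hK : K.IsHermitian :=
    (isHermitian_mul_conjTranspose_self B).sub (isHermitian_conjTranspose_mul_self B)
  have htr : K.trace = 0 := by rw [trace_sub, trace_mul_comm, sub_self]
  exact sub_eq_zero.mp <| hK.eq_zero_of_trace_eq_zero_of_det_eq_zero htr
    (exists_mulVec_eq_zero_iff.mp ⟨v, hv, hKv⟩)

theorem commute_conjTranspose_of_invariant_submodule {𝕜 : Type*} [RCLike 𝕜]
    (B : Matrix (Fin 2) (Fin 2) 𝕜) {P : Submodule 𝕜 (Fin 2 → 𝕜)} (hbot : P ≠ ⊥) (htop : P ≠ ⊤)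
    (hB : ∀ u ∈ P, B *ᵥ u ∈ P) (hBH : ∀ u ∈ P, Bᴴ *ᵥ u ∈ P) : B * Bᴴ = Bᴴ * B := by
  have hrank : Module.finrank 𝕜 P = 1 := by
    have := Submodule.finrank_lt htop
    have := Submodule.one_le_finrank_iff.mpr hbot
    simp only [Module.finrank_fin_fun] at *
    omega
  obtain ⟨v, hvP, hv0⟩ := P.ne_bot_iff.mp hbot
  have hP := eq_span_singleton_of_mem_of_finrank_eq_one hrank hvP hv0
  have eigen : ∀ M : Matrix (Fin 2) (Fin 2) 𝕜, (∀ u ∈ P, M *ᵥ u ∈ P) → ∃ c : 𝕜, M *ᵥ v = c • v :=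
    fun M hM ↦ by
      obtain ⟨c, hc⟩ := Submodule.mem_span_singleton.mp (hP ▸ hM v hvP)
      exact ⟨c, hc.symm⟩
  obtain ⟨l, hl⟩ := eigen B hB
  obtain ⟨m, hm⟩ := eigen Bᴴ hBH
  exact commute_conjTranspose_of_common_eigenvector B hv0 hl hm

end Matrix

theorem Submodule.mem_and_mem_of_add_mem_of_sub_mem {K V : Type*} [Field K] [CharZero K]
    [AddCommGroup V] [Module K V] {L : Submodule K V} {x y : V} (h₁ : x + y ∈ L)
    (h₂ : x - y ∈ L) : x ∈ L ∧ y ∈ L := by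
  have hx : x = (2 : K)⁻¹ • ((x + y) + (x - y)) := by module
  have hy : y = (2 : K)⁻¹ • ((x + y) - (x - y)) := by module
  constructor
  · rw [hx]
    exact L.smul_mem _ (L.add_mem h₁ h₂)
  · rw [hy]
    exact L.smul_mem _ (L.sub_mem h₁ h₂)

theorem Submodule.comap_ne_bot_of_inf_ne_bot {R M N : Type*} [Ring R] [AddCommGroup M]
    [Module R M] [AddCommGroup N] [Module R N] {f : M →ₗ[R] N} {L S : Submodule R N}
    (hS : S ≤ LinearMap.range f) (h : L ⊓ S ≠ ⊥) : L.comap f ≠ ⊥ := by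
  intro hc
  apply h
  rw [eq_bot_iff, ← map_bot f, ← hc, map_comap_eq, inf_comm]
  exact inf_le_inf_right L hS

def upperIncl : (Fin 2 → ℂ) →ₗ[ℂ] (Fin 4 → ℂ) where
  toFun u := ![u 0, u 1, 0, 0]
  map_add' u w := by ext i; fin_cases i <;> simp
  map_smul' c u := by ext i; fin_cases i <;> simp

def lowerIncl : (Fin 2 → ℂ) →ₗ[ℂ] (Fin 4 → ℂ) where
  toFun u := ![0, 0, u 0, u 1]
  map_add' u w := by ext i; fin_cases i <;> simp
  map_smul' c u := by ext i; fin_cases i <;> simp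

theorem range_upperIncl_sup_range_lowerIncl :
    LinearMap.range upperIncl ⊔ LinearMap.range lowerIncl = ⊤ := by
  refine eq_top_iff.mpr fun x _ ↦ Submodule.mem_sup.mpr
    ⟨upperIncl ![x 0, x 1], ⟨_, rfl⟩, lowerIncl ![x 2, x 3], ⟨_, rfl⟩, ?_⟩
  ext i; fin_cases i <;> simp [upperIncl, lowerIncl]

theorem span_single_le_range_upperIncl :
    Submodule.span ℂ {Pi.single (0 : Fin 4) (1 : ℂ), Pi.single (1 : Fin 4) (1 : ℂ)} ≤
      LinearMap.range upperIncl := by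
  rw [Submodule.span_le, Set.insert_subset_iff, Set.singleton_subset_iff]
  refine ⟨⟨![1, 0], ?_⟩, ⟨![0, 1], ?_⟩⟩ <;> ext i <;> fin_cases i <;> simp [upperIncl]

theorem span_single_le_range_lowerIncl :
    Submodule.span ℂ {Pi.single (2 : Fin 4) (1 : ℂ), Pi.single (3 : Fin 4) (1 : ℂ)} ≤
      LinearMap.range lowerIncl := by
  rw [Submodule.span_le, Set.insert_subset_iff, Set.singleton_subset_iff]
  refine ⟨⟨![1, 0], ?_⟩, ⟨![0, 1], ?_⟩⟩ <;> ext i <;> fin_cases i <;> simp [lowerIncl]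

theorem blockA_conjTranspose (α : ℂ) (C D : Matrix (Fin 2) (Fin 2) ℂ) :
    (blockA α C D)ᴴ = blockA (star α) Dᴴ Cᴴ := by
  ext i j; fin_cases i <;> fin_cases j <;> simp [blockA]

theorem blockA_mulVec_upperIncl (α : ℂ) (C D : Matrix (Fin 2) (Fin 2) ℂ) (u : Fin 2 → ℂ) :
    blockA α C D *ᵥ upperIncl u = α • upperIncl u + lowerIncl (D *ᵥ u) := by
  ext i; fin_cases i <;>
    simp [blockA, upperIncl, lowerIncl, mulVec, dotProduct, Fin.sum_univ_four]

theorem blockA_mulVec_lowerIncl (α : ℂ) (C D : Matrix (Fin 2) (Fin 2) ℂ) (u : Fin 2 → ℂ) :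
    blockA α C D *ᵥ lowerIncl u = upperIncl (C *ᵥ u) - α • lowerIncl u := by
  ext i; fin_cases i <;>
    simp [blockA, upperIncl, lowerIncl, mulVec, dotProduct, Fin.sum_univ_four]

section Invariant

variable {α : ℂ} {C D : Matrix (Fin 2) (Fin 2) ℂ} {L : Submodule ℂ (Fin 4 → ℂ)}

theorem lowerIncl_mulVec_mem (hL : ∀ x ∈ L, blockA α C D *ᵥ x ∈ L) {u : Fin 2 → ℂ}
    (hu : upperIncl u ∈ L) : lowerIncl (D *ᵥ u) ∈ L := by
  have h := L.sub_mem (hL _ hu) (L.smul_mem α hu)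
  rwa [blockA_mulVec_upperIncl, add_sub_cancel_left] at h

theorem upperIncl_mulVec_mem (hL : ∀ x ∈ L, blockA α C D *ᵥ x ∈ L) {u : Fin 2 → ℂ}
    (hu : lowerIncl u ∈ L) : upperIncl (C *ᵥ u) ∈ L := by
  have h := L.add_mem (hL _ hu) (L.smul_mem α hu)
  rwa [blockA_mulVec_lowerIncl, sub_add_cancel] at h

end Invariant

section BlockOfB

variable {α : ℂ} {B : Matrix (Fin 2) (Fin 2) ℂ} {L : Submodule ℂ (Fin 4 → ℂ)}

theorem lowerIncl_mem_of_upperIncl_mem (hL : ∀ x ∈ L, blockA α (Bᴴ + 1) (B - 1) *ᵥ x ∈ L)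
    (hL' : ∀ x ∈ L, (blockA α (Bᴴ + 1) (B - 1))ᴴ *ᵥ x ∈ L) {u : Fin 2 → ℂ}
    (hu : upperIncl u ∈ L) : lowerIncl (B *ᵥ u) ∈ L ∧ lowerIncl u ∈ L := by
  rw [blockA_conjTranspose] at hL'
  have hsub := lowerIncl_mulVec_mem hL hu
  have hadd := lowerIncl_mulVec_mem hL' hu
  simp only [conjTranspose_add, conjTranspose_conjTranspose, conjTranspose_one, add_mulVec,
    sub_mulVec, one_mulVec, map_add, map_sub] at hsub hadd
  exact Submodule.mem_and_mem_of_add_mem_of_sub_mem hadd hsub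

theorem upperIncl_mem_of_lowerIncl_mem (hL : ∀ x ∈ L, blockA α (Bᴴ + 1) (B - 1) *ᵥ x ∈ L)
    (hL' : ∀ x ∈ L, (blockA α (Bᴴ + 1) (B - 1))ᴴ *ᵥ x ∈ L) {u : Fin 2 → ℂ}
    (hu : lowerIncl u ∈ L) : upperIncl (Bᴴ *ᵥ u) ∈ L ∧ upperIncl u ∈ L := by
  rw [blockA_conjTranspose] at hL'
  have hadd := upperIncl_mulVec_mem hL hu
  have hsub := upperIncl_mulVec_mem hL' hu
  simp only [conjTranspose_sub, conjTranspose_one, add_mulVec, sub_mulVec, one_mulVec, map_add,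
    map_sub] at hsub hadd
  exact Submodule.mem_and_mem_of_add_mem_of_sub_mem hadd hsub

end BlockOfB

theorem stmt12 (α : ℂ) (B : Matrix (Fin 2) (Fin 2) ℂ)
    (hB : ¬ (B * Bᴴ = Bᴴ * B))
    (L : Submodule ℂ (Fin 4 → ℂ))
    (hL : ∀ x ∈ L, (blockA α (Bᴴ + 1) (B - 1)).mulVec x ∈ L)
    (hL' : ∀ x ∈ L, (blockA α (Bᴴ + 1) (B - 1))ᴴ.mulVec x ∈ L)
    (hint : L ⊓ Submodule.span ℂ
        {Pi.single (0 : Fin 4) (1 : ℂ), Pi.single (1 : Fin 4) (1 : ℂ)} ≠ ⊥ ∨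
      L ⊓ Submodule.span ℂ
        {Pi.single (2 : Fin 4) (1 : ℂ), Pi.single (3 : Fin 4) (1 : ℂ)} ≠ ⊥) :
    L = ⊤ := by
  set P := L.comap upperIncl
  have hlower : L.comap lowerIncl = P := le_antisymm
    (fun _ hu ↦ (upperIncl_mem_of_lowerIncl_mem hL hL' hu).2)
    (fun _ hu ↦ (lowerIncl_mem_of_upperIncl_mem hL hL' hu).2)
  have hbot : P ≠ ⊥ := hint.elim
    (Submodule.comap_ne_bot_of_inf_ne_bot span_single_le_range_upperIncl)
    (hlower ▸ Submodule.comap_ne_bot_of_inf_ne_bot span_single_le_range_lowerIncl)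
  have hBP : ∀ u ∈ P, B *ᵥ u ∈ P :=
    fun _ hu ↦ hlower ▸ (lowerIncl_mem_of_upperIncl_mem hL hL' hu).1
  have hBHP : ∀ u ∈ P, Bᴴ *ᵥ u ∈ P :=
    fun _ hu ↦
      (upperIncl_mem_of_lowerIncl_mem hL hL' (lowerIncl_mem_of_upperIncl_mem hL hL' hu).2).1
  have htop : P = ⊤ := by
    by_contra htop
    exact hB (commute_conjTranspose_of_invariant_submodule B hbot htop hBP hBHP)
  rw [eq_top_iff, ← range_upperIncl_sup_range_lowerIncl]
  exact sup_le (LinearMap.range_le_iff_comap.mpr htop)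
    (LinearMap.range_le_iff_comap.mpr (hlower.trans htop))
end
end

section
/- Let a₁, a₂, a₃ ∈ ℂ be nonzero and let A ∈ M₄(ℂ) be the tridiagonal matrix with zero diagonal, superdiagonal entries a₁, a₂, a₃ and subdiagonal entries a₁⁻¹, a₂⁻¹, a₃⁻¹. Then det(λ·I₄ − A) = λ⁴ − 3λ² + 1 for all λ ∈ ℂ. Consequently, the eigenvalues of A are exactly ±(1+√5)/2 and ±(√5−1)/2, independently of a₁, a₂, a₃. -/
open Matrix

noncomputable section

/-
The entries of a tridiagonal matrix enter its characteristic polynomial only through the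
products `bᵢ cᵢ` of opposite off-diagonal entries, which here all equal `1`. So `A` has the
characteristic polynomial `x⁴ - 3x² + 1 = (x² - x - 1)(x² + x - 1)` of the path on four
vertices, whose roots are `±φ` and `±φ⁻¹` for the golden ratio `φ = (1 + √5) / 2`.
-/

theorem det_smul_one_sub_tridiagonal_fin_four {R : Type*} [CommRing R] (b₁ b₂ b₃ c₁ c₂ c₃ x : R) :
    (x • (1 : Matrix (Fin 4) (Fin 4) R)
        - !![0, b₁, 0, 0; c₁, 0, b₂, 0; 0, c₂, 0, b₃; 0, 0, c₃, 0]).det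
      = x ^ 4 - (b₁ * c₁ + b₂ * c₂ + b₃ * c₃) * x ^ 2 + b₁ * c₁ * (b₃ * c₃) := by
  simp [det_succ_row_zero, Fin.sum_univ_succ, Fin.succAbove, one_apply]
  ring

open Real goldenRatio

theorem goldenRatio_sq_add_inv_sq : φ ^ 2 + φ⁻¹ ^ 2 = 3 := by
  rw [inv_goldenRatio, neg_sq, goldenRatio_sq, goldenConj_sq]
  linarith [goldenRatio_add_goldenConj]

theorem pow_four_sub_three_mul_sq_add_one_eq_zero_iff (x : ℂ) :
    x ^ 4 - 3 * x ^ 2 + 1 = 0 ↔ x = φ ∨ x = -φ ∨ x = (φ⁻¹ : ℝ) ∨ x = -(φ⁻¹ : ℝ) := by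
  have hsum : (φ : ℂ) ^ 2 + ((φ⁻¹ : ℝ) : ℂ) ^ 2 = 3 := by
    exact_mod_cast goldenRatio_sq_add_inv_sq
  have hprod : (φ : ℂ) * ((φ⁻¹ : ℝ) : ℂ) = 1 := by
    rw [← Complex.ofReal_mul, mul_inv_cancel₀ goldenRatio_ne_zero, Complex.ofReal_one]
  have hfactor : x ^ 4 - 3 * x ^ 2 + 1
      = (x - φ) * (x + φ) * ((x - (φ⁻¹ : ℝ)) * (x + (φ⁻¹ : ℝ))) := by
    linear_combination x ^ 2 * hsum - ((φ : ℂ) * ((φ⁻¹ : ℝ) : ℂ) + 1) * hprod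
  simp only [hfactor, mul_eq_zero, sub_eq_zero, add_eq_zero_iff_eq_neg, or_assoc]

theorem stmt14 (a₁ a₂ a₃ : ℂ) (h₁ : a₁ ≠ 0) (h₂ : a₂ ≠ 0) (h₃ : a₃ ≠ 0) :
    (∀ lam : ℂ,
      (lam • (1 : Matrix (Fin 4) (Fin 4) ℂ)
          - !![0, a₁, 0, 0;
               a₁⁻¹, 0, a₂, 0;
               0, a₂⁻¹, 0, a₃;
               0, 0, a₃⁻¹, 0]).det
        = lam ^ 4 - 3 * lam ^ 2 + 1) ∧
    (∀ μ : ℂ,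
      (μ • (1 : Matrix (Fin 4) (Fin 4) ℂ)
          - !![0, a₁, 0, 0;
               a₁⁻¹, 0, a₂, 0;
               0, a₂⁻¹, 0, a₃;
               0, 0, a₃⁻¹, 0]).det = 0 ↔
        (μ = (((1 + Real.sqrt 5) / 2 : ℝ) : ℂ) ∨ μ = -(((1 + Real.sqrt 5) / 2 : ℝ) : ℂ) ∨
          μ = (((Real.sqrt 5 - 1) / 2 : ℝ) : ℂ) ∨ μ = -(((Real.sqrt 5 - 1) / 2 : ℝ) : ℂ))) := by
  have hcharpoly : ∀ lam : ℂ,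
      (lam • (1 : Matrix (Fin 4) (Fin 4) ℂ)
          - !![0, a₁, 0, 0;
               a₁⁻¹, 0, a₂, 0;
               0, a₂⁻¹, 0, a₃;
               0, 0, a₃⁻¹, 0]).det
        = lam ^ 4 - 3 * lam ^ 2 + 1 := fun lam => by
    rw [det_smul_one_sub_tridiagonal_fin_four, mul_inv_cancel₀ h₁, mul_inv_cancel₀ h₂,
      mul_inv_cancel₀ h₃]
    ring
  have hinv : (Real.sqrt 5 - 1) / 2 = φ⁻¹ := by
    rw [inv_goldenRatio]
    ring
  refine ⟨hcharpoly, fun μ => ?_⟩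
  rw [hcharpoly, pow_four_sub_three_mul_sq_add_one_eq_zero_iff, hinv]
end
end

section
/- Let u, v, ξ₁, η₁, ξ₂, η₂ ∈ ℝ and b ∈ ℝ; set α = u + iv, b₁ = ξ₁ + iη₁, b₂ = ξ₂ + iη₂, and define x = (1/4)(b² + |b₁|² + |b₂|² − 2) + (1/2)Re(α²) − (1/8)(b² + (η₁−η₂)²)/(1+v²), y = (1/2)(η₁+η₂) + (1/2)Im(α²), z = (1/4)(b² + |b₁|² + |b₂|² + 2) + (1/2)|α|² − (1/8)(b² + (η₁−η₂)²)/(1+v²). Then z = x + (1 + v²), and z² − x² − y² = (1+v²)(ξ₁² + ξ₂²)/2 + (1+2v²)b²/4 + (u − v(η₁+η₂)/2)² + v²(η₁−η₂)²/4. In particular, if b ≠ 0 then z² > x² + y². -/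
open Matrix

noncomputable section

lemma Complex.sq_norm_add_mul_I (a b : ℝ) : ‖(a : ℂ) + b * Complex.I‖ ^ 2 = a ^ 2 + b ^ 2 := by
  rw [Complex.sq_norm, Complex.normSq_add_mul_I]

lemma Complex.re_add_mul_I_sq (a b : ℝ) : (((a : ℂ) + b * Complex.I) ^ 2).re = a ^ 2 - b ^ 2 := by
  simp [sq, Complex.mul_re]

lemma Complex.im_add_mul_I_sq (a b : ℝ) : (((a : ℂ) + b * Complex.I) ^ 2).im = 2 * a * b := by
  simp only [sq, Complex.mul_im, Complex.add_re, Complex.add_im, Complex.mul_re, Complex.ofReal_re,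
    Complex.ofReal_im, Complex.I_re, Complex.I_im, mul_zero, mul_one, sub_self, add_zero, zero_add]
  ring

theorem stmt17 (u v ξ₁ η₁ ξ₂ η₂ b : ℝ)
    (α : ℂ) (hα : α = (u : ℂ) + (v : ℂ) * Complex.I)
    (b₁ b₂ : ℂ) (hb₁ : b₁ = (ξ₁ : ℂ) + (η₁ : ℂ) * Complex.I)
    (hb₂ : b₂ = (ξ₂ : ℂ) + (η₂ : ℂ) * Complex.I)
    (x y z : ℝ)
    (hx : x = (1 / 4) * (b ^ 2 + ‖b₁‖ ^ 2 + ‖b₂‖ ^ 2 - 2)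
        + (1 / 2) * (α ^ 2).re - (1 / 8) * ((b ^ 2 + (η₁ - η₂) ^ 2) / (1 + v ^ 2)))
    (hy : y = (1 / 2) * (η₁ + η₂) + (1 / 2) * (α ^ 2).im)
    (hz : z = (1 / 4) * (b ^ 2 + ‖b₁‖ ^ 2 + ‖b₂‖ ^ 2 + 2)
        + (1 / 2) * ‖α‖ ^ 2 - (1 / 8) * ((b ^ 2 + (η₁ - η₂) ^ 2) / (1 + v ^ 2))) :
    z = x + (1 + v ^ 2) ∧
    z ^ 2 - x ^ 2 - y ^ 2
      = (1 + v ^ 2) * (ξ₁ ^ 2 + ξ₂ ^ 2) / 2 + (1 + 2 * v ^ 2) * b ^ 2 / 4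
        + (u - v * (η₁ + η₂) / 2) ^ 2 + v ^ 2 * (η₁ - η₂) ^ 2 / 4 ∧
    (b ≠ 0 → x ^ 2 + y ^ 2 < z ^ 2) := by
  subst hα hb₁ hb₂
  simp only [Complex.sq_norm_add_mul_I, Complex.re_add_mul_I_sq] at hx hz
  rw [Complex.im_add_mul_I_sq] at hy
  have hzx : z = x + (1 + v ^ 2) := by
    rw [hx, hz]
    ring
  have hsq : z ^ 2 - x ^ 2 - y ^ 2
      = (1 + v ^ 2) * (ξ₁ ^ 2 + ξ₂ ^ 2) / 2 + (1 + 2 * v ^ 2) * b ^ 2 / 4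
        + (u - v * (η₁ + η₂) / 2) ^ 2 + v ^ 2 * (η₁ - η₂) ^ 2 / 4 := by
    have hv : 1 + v ^ 2 ≠ 0 := by positivity
    rw [hx, hy, hz]
    field_simp
    ring
  refine ⟨hzx, hsq, fun hb => ?_⟩
  have hpos : 0 < (1 + v ^ 2) * (ξ₁ ^ 2 + ξ₂ ^ 2) / 2 + (1 + 2 * v ^ 2) * b ^ 2 / 4
      + (u - v * (η₁ + η₂) / 2) ^ 2 + v ^ 2 * (η₁ - η₂) ^ 2 / 4 := by
    positivity
  linarith
end
end

section
/- Let α ∈ ℂ, C, D ∈ M₂(ℂ), θ ∈ ℝ, and let A ∈ M₄(ℂ) be the block matrix [[αI₂, C],[D, −αI₂]]. Then there exists a real number c such that det(λ·I₄ − Im(e^{−iθ}A)) = (λ² − c)² for all λ ∈ ℂ (i.e., the Hermitian matrix Im(e^{−iθ}A) has its eigenvalues of the form ±λ₀ each with multiplicity 2) if and only if there exist r ≥ 0 and a unitary matrix U ∈ M₂(ℂ) such that e^{−iθ}C − e^{iθ}D* = r·U. -/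
open Matrix

noncomputable section

/-!
Write `e = exp(-iθ)`, `E = e C - ē D*` and `K = E / (2i)`. Then `Im(e A)` is the Hermitian block
matrix `[[β I, K], [K*, -β I]]` with `β = Im(e α)`, and its characteristic polynomial is `q(λ² - β²)`
where `q(μ) = μ² - tr(KK*) μ + det(KK*)` is the characteristic polynomial of `KK*`. This is a
square `(λ² - c)²` exactly when `q` has a double root, i.e. when the Hermitian matrix `KK*` has a
repeated eigenvalue, i.e. is scalar; and `KK*` (equivalently `EE*`) is scalar exactly when `E` is a
nonnegative multiple of a unitary.
-/

open ComplexConjugate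
open scoped ComplexOrder

theorem smul_blockA (e α : ℂ) (C D : Matrix (Fin 2) (Fin 2) ℂ) :
    e • blockA α C D = blockA (e * α) (e • C) (e • D) := by
  ext i j
  fin_cases i <;> fin_cases j <;> simp [blockA]

theorem Mim_blockA (α : ℂ) (C D : Matrix (Fin 2) (Fin 2) ℂ) :
    Mim (blockA α C D) =
      blockA α.im ((2 * Complex.I)⁻¹ • (C - Dᴴ)) ((2 * Complex.I)⁻¹ • (C - Dᴴ))ᴴ := by
  have hα : (2 * Complex.I)⁻¹ * (α - conj α) = α.im := by
    rw [Complex.sub_conj]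
    field_simp
    push_cast
    ring
  ext i j
  fin_cases i <;> fin_cases j <;> simp [Mim, blockA, ← hα] <;> ring

theorem det_smul_one_sub_blockA_conjTranspose (l b : ℂ) (K : Matrix (Fin 2) (Fin 2) ℂ) :
    (l • (1 : Matrix (Fin 4) (Fin 4) ℂ) - blockA b K Kᴴ).det
      = (l ^ 2 - b ^ 2) ^ 2 - (K * Kᴴ).trace * (l ^ 2 - b ^ 2) + (K * Kᴴ).det := by
  rw [det_mul, det_conjTranspose, trace_fin_two, det_fin_two]
  simp [blockA, det_succ_row_zero, Fin.sum_univ_succ, Fin.succAbove, Fin.castSucc, Fin.castAdd,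
    Fin.castLE, mul_apply, one_apply]
  ring

theorem exists_forall_sq_sub_eq_sq_iff (b s : ℝ) (p : ℂ) :
    (∃ c : ℝ, ∀ l : ℂ, (l ^ 2 - b ^ 2) ^ 2 - s * (l ^ 2 - b ^ 2) + p = (l ^ 2 - c) ^ 2) ↔
      (s : ℂ) ^ 2 = 4 * p := by
  constructor
  · rintro ⟨c, hc⟩
    -- the values at `l = 0` and `l = 1` already pin down both coefficients of the quadratic in `l²`
    linear_combination
      (s + 2 * c + 2 * (b : ℂ) ^ 2 - 4) * hc 0 - (s + 2 * c + 2 * (b : ℂ) ^ 2) * hc 1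
  · intro h
    refine ⟨b ^ 2 + s / 2, fun l => ?_⟩
    push_cast
    linear_combination (-1 / 4 : ℂ) * h

theorem Matrix.IsHermitian.trace_sq_eq_four_mul_det_iff {P : Matrix (Fin 2) (Fin 2) ℂ}
    (hP : P.IsHermitian) : P.trace ^ 2 = 4 * P.det ↔ ∃ t : ℝ, P = (t : ℂ) • 1 := by
  have h10 : P 1 0 = conj (P 0 1) := (hP.apply 1 0).symm
  have h00 : ((P 0 0).re : ℂ) = P 0 0 := Complex.conj_eq_iff_re.mp (hP.apply 0 0)
  have h11 : ((P 1 1).re : ℂ) = P 1 1 := Complex.conj_eq_iff_re.mp (hP.apply 1 1)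
  have hdisc : P.trace ^ 2 - 4 * P.det
      = (((P 0 0).re - (P 1 1).re) ^ 2 + 4 * Complex.normSq (P 0 1) : ℝ) := by
    rw [trace_fin_two, det_fin_two, h10]
    push_cast
    rw [h00, h11, ← Complex.mul_conj]
    ring
  constructor
  · intro h
    rw [← sub_eq_zero, hdisc, Complex.ofReal_eq_zero] at h
    have hd : P 1 1 = P 0 0 := by
      rw [← h00, ← h11]
      congr 1
      nlinarith [Complex.normSq_nonneg (P 0 1)]
    have hb : P 0 1 = 0 := by
      rw [← Complex.normSq_eq_zero]
      nlinarith [Complex.normSq_nonneg (P 0 1)]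
    refine ⟨(P 0 0).re, ?_⟩
    ext i j
    fin_cases i <;> fin_cases j <;> simp [h00, h10, hb, hd]
  · rintro ⟨t, rfl⟩
    rw [trace_fin_two, det_fin_two]
    simp only [smul_apply, one_apply_eq, one_apply_ne zero_ne_one, one_apply_ne one_ne_zero,
      smul_eq_mul, mul_one, mul_zero, sub_zero]
    ring

theorem exists_nonneg_smul_unitary_iff {n : Type*} [Fintype n] [DecidableEq n] [Nonempty n]
    (E : Matrix n n ℂ) :
    (∃ r : ℝ, 0 ≤ r ∧ ∃ U : Matrix n n ℂ, U * Uᴴ = 1 ∧ E = (r : ℂ) • U) ↔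
      ∃ t : ℝ, E * Eᴴ = (t : ℂ) • 1 := by
  constructor
  · rintro ⟨r, -, U, hU, rfl⟩
    refine ⟨r ^ 2, ?_⟩
    rw [conjTranspose_smul, smul_mul_smul_comm, hU, Complex.star_def, Complex.conj_ofReal]
    push_cast
    ring_nf
  · rintro ⟨t, ht⟩
    obtain ⟨i⟩ := ‹Nonempty n›
    have ht0 : 0 ≤ t := by
      simpa [ht] using (posSemidef_self_mul_conjTranspose E).diag_nonneg (i := i)
    rcases ht0.eq_or_lt with rfl | htpos
    · exact ⟨0, le_rfl, 1, by simp, by simpa using ht⟩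
    · set r := Real.sqrt t
      have hr : (r : ℂ) ≠ 0 := Complex.ofReal_ne_zero.mpr (Real.sqrt_pos.mpr htpos).ne'
      have hrt : (r : ℂ) ^ 2 = t := by rw [← Complex.ofReal_pow, Real.sq_sqrt ht0]
      refine ⟨r, Real.sqrt_nonneg t, (r : ℂ)⁻¹ • E, ?_,
        by rw [smul_smul, mul_inv_cancel₀ hr, one_smul]⟩
      rw [conjTranspose_smul, smul_mul_smul_comm, ht, smul_smul, star_inv₀, Complex.star_def,
        Complex.conj_ofReal, ← hrt]
      field_simp
      exact one_smul _ _

theorem exists_smul_mul_conjTranspose_smul_iff {n : Type*} [Fintype n] [DecidableEq n]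
    {k : ℂ} (hk : k ≠ 0) (E : Matrix n n ℂ) :
    (∃ t : ℝ, (k • E) * (k • E)ᴴ = (t : ℂ) • 1) ↔ ∃ t : ℝ, E * Eᴴ = (t : ℂ) • 1 := by
  have hk' : (Complex.normSq k : ℂ) ≠ 0 := by simpa using hk
  rw [conjTranspose_smul, smul_mul_smul_comm, Complex.star_def, Complex.mul_conj]
  constructor
  · rintro ⟨t, ht⟩
    refine ⟨t / Complex.normSq k, ?_⟩
    rw [← inv_smul_smul₀ hk' (E * Eᴴ), ht, smul_smul]
    push_cast
    ring_nf
  · rintro ⟨t, ht⟩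
    exact ⟨Complex.normSq k * t, by rw [ht, smul_smul]; push_cast; rfl⟩

theorem stmt19 (α : ℂ) (C D : Matrix (Fin 2) (Fin 2) ℂ) (θ : ℝ) :
    (∃ c : ℝ, ∀ lam : ℂ,
        (lam • (1 : Matrix (Fin 4) (Fin 4) ℂ)
            - Mim (Complex.exp (-(θ : ℂ) * Complex.I) • blockA α C D)).det
          = (lam ^ 2 - (c : ℂ)) ^ 2) ↔
      ∃ r : ℝ, 0 ≤ r ∧ ∃ U : Matrix (Fin 2) (Fin 2) ℂ, U * Uᴴ = 1 ∧
        Complex.exp (-(θ : ℂ) * Complex.I) • C - Complex.exp ((θ : ℂ) * Complex.I) • Dᴴ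
          = (r : ℂ) • U := by
  have he : Complex.exp ((θ : ℂ) * Complex.I) = conj (Complex.exp (-(θ : ℂ) * Complex.I)) := by
    rw [← Complex.exp_conj]
    congr 1
    simp only [map_mul, map_neg, Complex.conj_ofReal, Complex.conj_I]
    ring
  set e := Complex.exp (-(θ : ℂ) * Complex.I)
  set E := e • C - conj e • Dᴴ
  set K := (2 * Complex.I)⁻¹ • E
  have hM : Mim (e • blockA α C D) = blockA (e * α).im K Kᴴ := by
    rw [smul_blockA, Mim_blockA, conjTranspose_smul, Complex.star_def]
  have hP := isHermitian_mul_conjTranspose_self K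
  obtain ⟨s, hs⟩ : ∃ s : ℝ, (K * Kᴴ).trace = s :=
    ⟨_, (Complex.conj_eq_iff_re.mp (by rw [← Complex.star_def, ← trace_conjTranspose, hP.eq])).symm⟩
  simp only [he, hM, det_smul_one_sub_blockA_conjTranspose, hs]
  rw [exists_forall_sq_sub_eq_sq_iff, ← hs, hP.trace_sq_eq_four_mul_det_iff,
    exists_smul_mul_conjTranspose_smul_iff (by simp) E, exists_nonneg_smul_unitary_iff]
end
end
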